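/- Suppose Assumption 1 holds and that every eigenvalue of QS is real and lies in [0, 4/3). If 1 is an eigenvalue of the expected mapping matrix M, then the eigenvalue 1 has a complete set of eigenvectors, i.e., its geometric multiplicity equals its algebraic multiplicity. -/

import Mathlib

open Matrix Filter Topology MeasureTheory ProbabilityTheory Kronecker

namespace RAC

noncomputable section

/-- `S = H + β AᵀA`. -/
def Smat {n m : ℕ} (H : Matrix (Fin n) (Fin n) ℝ) (A : Matrix (Fin m) (Fin n) ℝ)
    (β : ℝ) : Matrix (Fin n) (Fin n) ℝ :=
  H + β • (Aᵀ * A)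

/-- An update order, encoded by assigning to each variable index its block;
all `p` fibers (blocks) have size `s`. -/
def IsUpdateOrder (n p s : ℕ) (σ : Fin n → Fin p) : Prop :=
  ∀ i : Fin p, (Finset.univ.filter fun a => σ a = i).card = s

instance (n p s : ℕ) : DecidablePred (IsUpdateOrder n p s) := fun _ => by
  unfold IsUpdateOrder; infer_instance

/-- The set `Γ` of all update orders. -/
abbrev UpdateOrder (n p s : ℕ) := {σ : Fin n → Fin p // IsUpdateOrder n p s σ}

/-- The block lower-triangular matrix `L_σ`. -/
def Lmat {n m p : ℕ} (H : Matrix (Fin n) (Fin n) ℝ) (A : Matrix (Fin m) (Fin n) ℝ)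
    (β : ℝ) (σ : Fin n → Fin p) : Matrix (Fin n) (Fin n) ℝ :=
  Matrix.of fun a b => if σ b ≤ σ a then Smat H A β a b else 0

/-- Assumption 1: every size-`s` principal submatrix of `H + β AᵀA` is positive definite. -/
def Assumption1 {n m : ℕ} (H : Matrix (Fin n) (Fin n) ℝ) (A : Matrix (Fin m) (Fin n) ℝ)
    (β : ℝ) (s : ℕ) : Prop :=
  ∀ τ : Finset (Fin n), τ.card = s →
    ((Smat H A β).submatrix (fun x : τ => (x : Fin n)) (fun x : τ => (x : Fin n))).PosDef

/-- `L̄_σ = [[L_σ, 0], [βA, I]]`. -/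
def Lbar {n m p : ℕ} (H : Matrix (Fin n) (Fin n) ℝ) (A : Matrix (Fin m) (Fin n) ℝ)
    (β : ℝ) (σ : Fin n → Fin p) : Matrix (Fin n ⊕ Fin m) (Fin n ⊕ Fin m) ℝ :=
  Matrix.fromBlocks (Lmat H A β σ) 0 (β • A) 1

/-- `R̄_σ = [[L_σ − S, Aᵀ], [0, I]]`. -/
def Rbar {n m p : ℕ} (H : Matrix (Fin n) (Fin n) ℝ) (A : Matrix (Fin m) (Fin n) ℝ)
    (β : ℝ) (σ : Fin n → Fin p) : Matrix (Fin n ⊕ Fin m) (Fin n ⊕ Fin m) ℝ :=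
  Matrix.fromBlocks (Lmat H A β σ - Smat H A β) Aᵀ 0 1

/-- `b̄ = (−c + β Aᵀb ; β b)`. -/
def bbar {n m : ℕ} (c : Fin n → ℝ) (A : Matrix (Fin m) (Fin n) ℝ) (b : Fin m → ℝ)
    (β : ℝ) : Fin n ⊕ Fin m → ℝ :=
  Sum.elim (-c + β • (Aᵀ *ᵥ b)) (β • b)

/-- The per-iteration mapping matrix `M_σ = L̄_σ⁻¹ R̄_σ`. -/
def Mmat {n m p : ℕ} (H : Matrix (Fin n) (Fin n) ℝ) (A : Matrix (Fin m) (Fin n) ℝ)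
    (β : ℝ) (σ : Fin n → Fin p) : Matrix (Fin n ⊕ Fin m) (Fin n ⊕ Fin m) ℝ :=
  (Lbar H A β σ)⁻¹ * Rbar H A β σ

/-- `Q = |Γ|⁻¹ Σ_{σ∈Γ} L_σ⁻¹`. -/
def Qmat (n m p s : ℕ) (H : Matrix (Fin n) (Fin n) ℝ) (A : Matrix (Fin m) (Fin n) ℝ)
    (β : ℝ) : Matrix (Fin n) (Fin n) ℝ :=
  (Fintype.card (UpdateOrder n p s) : ℝ)⁻¹ •
    ∑ σ : UpdateOrder n p s, (Lmat H A β σ.1)⁻¹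

/-- The expected mapping matrix `M`. -/
def Mexp (n m p s : ℕ) (H : Matrix (Fin n) (Fin n) ℝ) (A : Matrix (Fin m) (Fin n) ℝ)
    (β : ℝ) : Matrix (Fin n ⊕ Fin m) (Fin n ⊕ Fin m) ℝ :=
  Matrix.fromBlocks (1 - Qmat n m p s H A β * Smat H A β) (Qmat n m p s H A β * Aᵀ)
    (-(β • A) + β • (A * (Qmat n m p s H A β * Smat H A β)))
    (1 - β • (A * (Qmat n m p s H A β * Aᵀ)))

/-- KKT point of `min ½xᵀHx + cᵀx  s.t.  Ax = b`. -/
def IsKKT {n m : ℕ} (H : Matrix (Fin n) (Fin n) ℝ) (c : Fin n → ℝ)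
    (A : Matrix (Fin m) (Fin n) ℝ) (b : Fin m → ℝ) (x : Fin n → ℝ) (y : Fin m → ℝ) :
    Prop :=
  H *ᵥ x + c - Aᵀ *ᵥ y = 0 ∧ A *ᵥ x = b

/-- `μ` is an eigenvalue of the complex matrix `M`. -/
def HasEigen {ι : Type*} [Fintype ι] (M : Matrix ι ι ℂ) (μ : ℂ) : Prop :=
  ∃ v : ι → ℂ, v ≠ 0 ∧ M *ᵥ v = μ • v

/-- `μ` is a (real) eigenvalue of the real matrix `M`. -/
def HasEigenR {ι : Type*} [Fintype ι] (M : Matrix ι ι ℝ) (μ : ℝ) : Prop :=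
  ∃ v : ι → ℝ, v ≠ 0 ∧ M *ᵥ v = μ • v

end

end RAC

open RAC Matrix

/-!
Write `N = M - 1`. Geometric and algebraic multiplicity of the eigenvalue `1` agree as soon as
`ker N² = ker N`, and `N (x, y) = (-Q u, β A (Q u - x))` with `u = S x - Aᵀ y`.
Assumption 1 makes the symmetric part `L_σ + L_σᵀ = S + D_σ` of every `L_σ` positive definite
(`D_σ` is the block-diagonal part of `S`), hence also that of `L_σ⁻¹` and of their average `Q`;
so `Q w = 0` or `wᵀ Q w = 0` force `w = 0`. If `N² (x, y) = 0`, this gives successively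
`A Q u = 0` and `S Q u = β AᵀA x`, then `S Q u = 0` and `A x = 0` because `S` is positive
semidefinite, then `uᵀ Q u = 0`, so `u = 0` and `N (x, y) = 0`.
-/

open Finset

namespace Module.End

variable {K V : Type*} [Field K] [AddCommGroup V] [Module K V]

theorem maxGenEigenspace_eq_eigenspace_of_ker_sq_le {f : End K V} {μ : K}
    (h : LinearMap.ker ((f - μ • 1) ^ 2) ≤ LinearMap.ker (f - μ • 1)) :
    f.maxGenEigenspace μ = f.eigenspace μ := by
  have hstable : LinearMap.ker ((f - μ • 1) ^ 1) = LinearMap.ker ((f - μ • 1) ^ 2) := by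
    rw [pow_one, sq, Module.End.mul_eq_comp]
    exact le_antisymm (LinearMap.ker_le_ker_comp _ _) (by rwa [← Module.End.mul_eq_comp, ← sq])
  refine le_antisymm ?_ eigenspace_le_maxGenEigenspace
  rw [← iSup_genEigenspace_eq]
  refine iSup_le fun k => ?_
  calc f.genEigenspace μ k ≤ f.genEigenspace μ (1 + k : ℕ) :=
        (f.genEigenspace μ).monotone (by norm_cast; omega)
    _ = f.eigenspace μ := by
        rw [genEigenspace_nat, ← ker_pow_constant hstable k, ← genEigenspace_nat]; rfl

theorem finrank_eigenspace_eq_rootMultiplicity_of_ker_sq_le [FiniteDimensional K V]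
    {f : End K V} {μ : K} (h : LinearMap.ker ((f - μ • 1) ^ 2) ≤ LinearMap.ker (f - μ • 1)) :
    Module.finrank K (f.eigenspace μ) = f.charpoly.rootMultiplicity μ := by
  rw [← maxGenEigenspace_eq_eigenspace_of_ker_sq_le h, LinearMap.finrank_maxGenEigenspace_eq]

end Module.End

namespace Matrix

theorem finrank_ker_toLin'_sub_id_eq_rootMultiplicity_one {ι K : Type*} [Fintype ι]
    [DecidableEq ι] [Field K] {M : Matrix ι ι K}
    (h : ∀ v, (M - 1) *ᵥ ((M - 1) *ᵥ v) = 0 → (M - 1) *ᵥ v = 0) :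
    Module.finrank K (LinearMap.ker (toLin' M - LinearMap.id)) =
      M.charpoly.rootMultiplicity 1 := by
  have hsub : toLin' M - (1 : K) • 1 = toLin' (M - 1) := by
    rw [one_smul, map_sub, toLin'_one]; rfl
  have hker : Module.End.eigenspace (toLin' M) 1 = LinearMap.ker (toLin' M - LinearMap.id) := by
    rw [Module.End.eigenspace_def, one_smul]; rfl
  rw [← hker, Module.End.finrank_eigenspace_eq_rootMultiplicity_of_ker_sq_le, charpoly_toLin']
  intro v hv
  simp only [LinearMap.mem_ker, sq, Module.End.mul_apply, hsub, toLin'_apply] at hv ⊢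
  exact h v hv

section SymmetricPart

variable {ι : Type*} [Fintype ι]

theorem dotProduct_add_transpose_mulVec {R : Type*} [CommRing R] (L : Matrix ι ι R)
    (x : ι → R) : x ⬝ᵥ ((L + Lᵀ) *ᵥ x) = 2 * (x ⬝ᵥ (L *ᵥ x)) := by
  rw [add_mulVec, dotProduct_add, dotProduct_mulVec x Lᵀ, vecMul_transpose, dotProduct_comm]
  ring

variable {L : Matrix ι ι ℝ}

theorem eq_zero_of_dotProduct_mulVec_self_eq_zero (hL : (L + Lᵀ).PosDef) {x : ι → ℝ}
    (h : x ⬝ᵥ (L *ᵥ x) = 0) : x = 0 := by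
  by_contra hx
  have hpos := hL.dotProduct_mulVec_pos hx
  rw [star_trivial, dotProduct_add_transpose_mulVec, h, mul_zero] at hpos
  exact hpos.false

variable [DecidableEq ι]

theorem isUnit_of_posDef_add_transpose (hL : (L + Lᵀ).PosDef) : IsUnit L := by
  refine mulVec_injective_iff_isUnit.mp fun x y hxy => sub_eq_zero.mp ?_
  exact eq_zero_of_dotProduct_mulVec_self_eq_zero hL
    (by rw [mulVec_sub, hxy, sub_self, dotProduct_zero])

theorem posDef_inv_add_transpose (hL : (L + Lᵀ).PosDef) : (L⁻¹ + L⁻¹ᵀ).PosDef := by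
  have hunit := isUnit_of_posDef_add_transpose hL
  have hdet := (isUnit_iff_isUnit_det L).mp hunit
  have hconj : L⁻¹ + L⁻¹ᵀ = L⁻¹ * (L + Lᵀ) * L⁻¹ᴴ := by
    rw [conjTranspose_eq_transpose_of_trivial, mul_add, add_mul, nonsing_inv_mul _ hdet,
      one_mul, mul_assoc, ← transpose_mul, nonsing_inv_mul _ hdet, transpose_one, mul_one,
      add_comm]
  rw [hconj]
  exact hL.mul_mul_conjTranspose_same
    (vecMul_injective_iff_isUnit.mpr (isUnit_nonsing_inv_iff.mpr hunit))

end SymmetricPart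

section BlockDiagonalPart

variable {ι κ R : Type*} [Fintype ι] [Fintype κ] [DecidableEq κ]

def blockDiagonalPart [Zero R] (σ : ι → κ) (S : Matrix ι ι R) : Matrix ι ι R :=
  of fun a b => if σ a = σ b then S a b else 0

theorem dotProduct_blockDiagonalPart_mulVec [Semiring R] (σ : ι → κ) (S : Matrix ι ι R)
    (x : ι → R) :
    x ⬝ᵥ (blockDiagonalPart σ S *ᵥ x) =
      ∑ j, (fun a : univ.filter (σ · = j) => x a) ⬝ᵥ
        (S.submatrix (fun a : univ.filter (σ · = j) => (a : ι))
          (fun a : univ.filter (σ · = j) => (a : ι)) *ᵥ fun a => x a) := by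
  calc x ⬝ᵥ (blockDiagonalPart σ S *ᵥ x)
      = ∑ a, x a * ∑ b ∈ univ.filter (σ · = σ a), S a b * x b := by
        simp only [dotProduct, mulVec, blockDiagonalPart, of_apply, ite_mul, zero_mul,
          sum_filter, eq_comm]
    _ = ∑ j, ∑ a ∈ univ.filter (σ · = j), x a * ∑ b ∈ univ.filter (σ · = j), S a b * x b := by
        rw [← sum_fiberwise univ σ]
        refine sum_congr rfl fun j _ => sum_congr rfl fun a ha => ?_
        rw [(mem_filter.mp ha).2]
    _ = _ := by
        refine sum_congr rfl fun j _ => ?_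
        simp only [dotProduct, mulVec, submatrix_apply, ← sum_coe_sort (univ.filter (σ · = j))]

theorem posDef_blockDiagonalPart {S : Matrix ι ι ℝ} (hS : S.IsHermitian) {σ : ι → κ}
    (h : ∀ j, (S.submatrix (fun a : univ.filter (σ · = j) => (a : ι))
      (fun a : univ.filter (σ · = j) => (a : ι))).PosDef) :
    (blockDiagonalPart σ S).PosDef := by
  have hsymm : (blockDiagonalPart σ S).IsHermitian := by
    refine IsHermitian.ext fun a b => ?_
    simp only [blockDiagonalPart, of_apply, star_trivial, eq_comm (a := σ a)]
    split_ifs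
    · simpa using hS.apply a b
    · rfl
  refine PosDef.of_dotProduct_mulVec_pos hsymm fun x hx => ?_
  obtain ⟨a₀, ha₀⟩ : ∃ a, x a ≠ 0 := Function.ne_iff.mp hx
  rw [star_trivial, dotProduct_blockDiagonalPart_mulVec]
  refine sum_pos' (fun j _ => ?_) ⟨σ a₀, mem_univ _, ?_⟩
  · simpa using (h j).posSemidef.dotProduct_mulVec_nonneg (fun a => x a)
  · have hx₀ : (fun a : univ.filter (σ · = σ a₀) => x a) ≠ 0 :=
      Function.ne_iff.mpr ⟨⟨a₀, by simp⟩, ha₀⟩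
    simpa using (h (σ a₀)).dotProduct_mulVec_pos hx₀

end BlockDiagonalPart

end Matrix

namespace RAC

section MappingMatrix

variable {ι κ : Type*} [Fintype ι] [Fintype κ] [DecidableEq ι] [DecidableEq κ]

def mappingMatrix (Q S : Matrix ι ι ℝ) (A : Matrix κ ι ℝ) (β : ℝ) :
    Matrix (ι ⊕ κ) (ι ⊕ κ) ℝ :=
  fromBlocks (1 - Q * S) (Q * Aᵀ) (-(β • A) + β • (A * (Q * S))) (1 - β • (A * (Q * Aᵀ)))

theorem mappingMatrix_sub_one_mulVec (Q S : Matrix ι ι ℝ) (A : Matrix κ ι ℝ) (β : ℝ)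
    (x : ι → ℝ) (y : κ → ℝ) :
    (mappingMatrix Q S A β - 1) *ᵥ Sum.elim x y =
      Sum.elim (-(Q *ᵥ (S *ᵥ x - Aᵀ *ᵥ y))) (β • (A *ᵥ (Q *ᵥ (S *ᵥ x - Aᵀ *ᵥ y) - x))) := by
  rw [sub_mulVec, one_mulVec, mappingMatrix, fromBlocks_mulVec]
  ext (i | i) <;>
    simp only [Sum.elim_comp_inl, Sum.elim_comp_inr, Sum.elim_inl, Sum.elim_inr, Pi.sub_apply,
      Pi.add_apply, Pi.neg_apply, Pi.smul_apply, smul_eq_mul, sub_mulVec, add_mulVec,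
      one_mulVec, neg_mulVec, smul_mulVec, mulVec_sub, ← mulVec_mulVec] <;>
    ring

theorem mappingMatrix_sub_one_mulVec_eq_zero_of_sq {Q S : Matrix ι ι ℝ} {A : Matrix κ ι ℝ}
    {β : ℝ} (hQ : (Q + Qᵀ).PosDef) (hS : S.PosSemidef) (hβ : β ≠ 0) (v : ι ⊕ κ → ℝ)
    (hv : (mappingMatrix Q S A β - 1) *ᵥ ((mappingMatrix Q S A β - 1) *ᵥ v) = 0) :
    (mappingMatrix Q S A β - 1) *ᵥ v = 0 := by
  obtain ⟨x, y, rfl⟩ : ∃ x y, v = Sum.elim x y :=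
    ⟨v ∘ Sum.inl, v ∘ Sum.inr, (Sum.elim_comp_inl_inr v).symm⟩
  have hSsymm : Sᵀ = S := by rw [← conjTranspose_eq_transpose_of_trivial]; exact hS.isHermitian
  set u := S *ᵥ x - Aᵀ *ᵥ y
  set w := Q *ᵥ u
  rw [mappingMatrix_sub_one_mulVec, mappingMatrix_sub_one_mulVec, ← Sum.elim_zero_zero,
    Sum.elim_eq_iff] at hv
  set u' := S *ᵥ -w - Aᵀ *ᵥ (β • (A *ᵥ (w - x)))
  obtain ⟨hQu', hAQu'⟩ := hv
  have hu' : u' = 0 :=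
    eq_zero_of_dotProduct_mulVec_self_eq_zero hQ (by rw [neg_eq_zero.mp hQu', dotProduct_zero])
  have hAw : A *ᵥ w = 0 := by
    rwa [neg_eq_zero.mp hQu', zero_sub, neg_neg, smul_eq_zero, or_iff_right hβ] at hAQu'
  have hu'_eq : u' = β • (Aᵀ *ᵥ (A *ᵥ x)) - S *ᵥ w := by
    simp only [u', mulVec_neg, mulVec_sub, hAw, zero_sub, mulVec_smul, smul_neg]
    abel
  have hSw : S *ᵥ w = β • (Aᵀ *ᵥ (A *ᵥ x)) := (sub_eq_zero.mp (hu'_eq ▸ hu')).symm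
  have hSw0 : S *ᵥ w = 0 := by
    refine (hS.dotProduct_mulVec_zero_iff w).mp ?_
    rw [star_trivial, hSw, dotProduct_smul, dotProduct_mulVec, vecMul_transpose, hAw,
      zero_dotProduct, smul_zero]
  have hAx : A *ᵥ x = 0 := by
    rw [hSw0, eq_comm, smul_eq_zero, or_iff_right hβ, mulVec_mulVec,
      ← conjTranspose_eq_transpose_of_trivial] at hSw
    exact (conjTranspose_mul_self_mulVec_eq_zero A x).mp hSw
  have hu : u = 0 := by
    refine eq_zero_of_dotProduct_mulVec_self_eq_zero hQ ?_
    have hSx : (S *ᵥ x) ⬝ᵥ w = 0 := by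
      rw [dotProduct_comm, dotProduct_mulVec, ← mulVec_transpose, hSsymm, hSw0, zero_dotProduct]
    have hAy : (Aᵀ *ᵥ y) ⬝ᵥ w = 0 := by
      rw [dotProduct_comm, dotProduct_mulVec, vecMul_transpose, hAw, zero_dotProduct]
    rw [sub_dotProduct, hSx, hAy, sub_zero]
  rw [mappingMatrix_sub_one_mulVec]
  simp [u, hu, mulVec_neg, hAx]

end MappingMatrix

variable {n m p s : ℕ} {H : Matrix (Fin n) (Fin n) ℝ} {A : Matrix (Fin m) (Fin n) ℝ} {β : ℝ}

theorem Mexp_eq_mappingMatrix :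
    Mexp n m p s H A β = mappingMatrix (Qmat n m p s H A β) (Smat H A β) A β :=
  rfl

theorem posSemidef_Smat (hH : H.PosSemidef) (hβ : 0 ≤ β) : (Smat H A β).PosSemidef := by
  refine hH.add (PosSemidef.smul ?_ hβ)
  simpa using posSemidef_conjTranspose_mul_self A

theorem Lmat_add_transpose (hS : (Smat H A β).IsHermitian) (σ : Fin n → Fin p) :
    Lmat H A β σ + (Lmat H A β σ)ᵀ = Smat H A β + blockDiagonalPart σ (Smat H A β) := by
  ext a b
  have hba : Smat H A β b a = Smat H A β a b := by simpa using hS.apply a b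
  simp only [Matrix.add_apply, transpose_apply, Lmat, blockDiagonalPart, of_apply]
  rcases lt_trichotomy (σ a) (σ b) with h | h | h
  · simp [h.ne, h.le, not_le.mpr h, hba]
  · simp [h, hba]
  · simp [h.ne', h.le, not_le.mpr h]

theorem posDef_Lmat_add_transpose (hH : H.PosSemidef) (hβ : 0 ≤ β)
    (hA1 : Assumption1 H A β s) {σ : Fin n → Fin p} (hσ : IsUpdateOrder n p s σ) :
    (Lmat H A β σ + (Lmat H A β σ)ᵀ).PosDef := by
  have hS := posSemidef_Smat (A := A) hH hβ
  rw [Lmat_add_transpose hS.isHermitian]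
  exact PosDef.posSemidef_add hS (posDef_blockDiagonalPart hS.isHermitian fun j => hA1 _ (hσ j))

theorem nonempty_updateOrder (hn : n = p * s) : Nonempty (UpdateOrder n p s) := by
  let e : Fin n ≃ Fin p × Fin s := (finCongr hn).trans finProdFinEquiv.symm
  refine ⟨⟨fun a => (e a).1, fun i => ?_⟩⟩
  rw [card_filter, ← e.symm.sum_comp, Fintype.sum_prod_type]
  simp

theorem posDef_Qmat_add_transpose (hn : n = p * s) (hH : H.PosSemidef) (hβ : 0 ≤ β)
    (hA1 : Assumption1 H A β s) :
    (Qmat n m p s H A β + (Qmat n m p s H A β)ᵀ).PosDef := by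
  have := nonempty_updateOrder hn
  have hsum : Qmat n m p s H A β + (Qmat n m p s H A β)ᵀ =
      (Fintype.card (UpdateOrder n p s) : ℝ)⁻¹ •
        ∑ σ : UpdateOrder n p s, ((Lmat H A β σ.1)⁻¹ + (Lmat H A β σ.1)⁻¹ᵀ) := by
    rw [Qmat, transpose_smul, transpose_sum, ← smul_add, ← sum_add_distrib]
  rw [hsum]
  refine PosDef.smul (posDef_sum univ_nonempty fun σ _ => ?_) (by positivity)
  exact posDef_inv_add_transpose (posDef_Lmat_add_transpose hH hβ hA1 σ.2)

end RAC

theorem eigenvalue_one_complete_eigenvectors_general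
    (n m p s : ℕ) (hn : n = p * s)
    (H : Matrix (Fin n) (Fin n) ℝ) (hH : H.PosSemidef)
    (A : Matrix (Fin m) (Fin n) ℝ) (β : ℝ) (hβ : 0 < β)
    (hA1 : Assumption1 H A β s) :
    Module.finrank ℝ
        (LinearMap.ker (Matrix.toLin' (Mexp n m p s H A β) - LinearMap.id)) =
      (Mexp n m p s H A β).charpoly.rootMultiplicity 1 := by
  have hQ := posDef_Qmat_add_transpose hn hH hβ.le hA1
  have hS := posSemidef_Smat (A := A) hH hβ.le
  rw [Mexp_eq_mappingMatrix]
  exact finrank_ker_toLin'_sub_id_eq_rootMultiplicity_one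
    (mappingMatrix_sub_one_mulVec_eq_zero_of_sq hQ hS hβ.ne')

/-- Under Assumption 1 and the eigenvalue bound on `QS`, if `1` is an
eigenvalue of the expected mapping matrix `M`, then its geometric multiplicity (the
dimension of the eigenspace for `1`) equals its algebraic multiplicity (its multiplicity
as a root of the characteristic polynomial). -/
theorem eigenvalue_one_complete_eigenvectors
    (n m p s : ℕ) (hp : 0 < p) (hs : 0 < s) (hn : n = p * s)
    (H : Matrix (Fin n) (Fin n) ℝ) (hH : H.PosSemidef)
    (A : Matrix (Fin m) (Fin n) ℝ) (β : ℝ) (hβ : 0 < β)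
    (hA1 : Assumption1 H A β s)
    (hQS : ∀ lam : ℂ,
      HasEigen (((Qmat n m p s H A β * Smat H A β).map Complex.ofReal)) lam →
      lam.im = 0 ∧ 0 ≤ lam.re ∧ lam.re < 4 / 3)
    (hone : HasEigenR (Mexp n m p s H A β) 1) :
    Module.finrank ℝ
        (LinearMap.ker (Matrix.toLin' (Mexp n m p s H A β) - LinearMap.id)) =
      (Mexp n m p s H A β).charpoly.rootMultiplicity 1 :=
  eigenvalue_one_complete_eigenvectors_general n m p s hn H hH A β hβ hA1
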